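/- arXiv:quant-ph/0309120 — 2 statements merged into one kernel-verified Lean document; each statement's English description precedes it below -/
import Mathlib

section
/- Let F_q have odd characteristic p and let v_{a,b} = q^{-1/2}(ω_p^{tr(a x² + b x)})_{x ∈ F_q}. If a ≠ c in F_q, then for all b, d ∈ F_q one has |⟨v_{a,b}, v_{c,d}⟩|² = 1/q; that is, the bases B_a and B_c are mutually unbiased. -/
open scoped InnerProductSpace

/-- The vector `v_{a,b} = q^{-1/2} (ω_p^{tr(a x² + b x)})_{x ∈ F_q}` of `ℂ^q`,
where `ω_p = exp(2πi/p)` and `tr` is the absolute trace from `F_q` to `F_p`. -/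
noncomputable def v (p : ℕ) (F : Type) [Field F] [Fintype F] [Algebra (ZMod p) F]
    (a b : F) : EuclideanSpace ℂ F :=
  WithLp.toLp 2 (fun x => (1 / Real.sqrt (Fintype.card F) : ℂ) *
    Complex.exp (2 * Real.pi * Complex.I *
      (ZMod.val (Algebra.trace (ZMod p) F (a * x ^ 2 + b * x)) : ℂ) / p))

/-!
With `ψ = ω_p^{tr(·)}`, a primitive additive character of `F_q`, one has
`v_{a,b}(x) = q^{-1/2} ψ(a x² + b x)`, so `⟨v_{a,b}, v_{c,d}⟩ = S / q` for the quadratic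
exponential sum `S = ∑ₓ ψ(α x² + β x)` with `α = c - a`. Expanding `|S|²` and substituting
`x = y + t` gives `|S|² = ∑ₜ ψ(α t² + β t) ∑_y ψ(2 α t y)`. As `p` is odd, `2 α ≠ 0`, so
the inner sum vanishes unless `t = 0`, where it is `q`. Hence `|S|² = q`.
-/

open Finset

namespace AddChar

theorem sq_norm_sum_eq_sum_sum_sub {G A : Type*} [AddCommGroup G] [Fintype G] [AddCommGroup A]
    [Finite A] (ψ : AddChar A ℂ) (f : G → A) :
    (‖∑ x, ψ (f x)‖ : ℂ) ^ 2 = ∑ t, ∑ y, ψ (f (y + t) - f y) :=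
  calc (‖∑ x, ψ (f x)‖ : ℂ) ^ 2 = ∑ y, ∑ x, ψ (f x - f y) := by
        simp only [← Complex.mul_conj', map_sum, sum_mul_sum, sub_eq_add_neg, map_add_eq_mul,
          map_neg_eq_conj]
        exact sum_comm
    _ = ∑ y, ∑ t, ψ (f (y + t) - f y) :=
        sum_congr rfl fun y _ => (Equiv.sum_comp (Equiv.addLeft y) _).symm
    _ = ∑ t, ∑ y, ψ (f (y + t) - f y) := sum_comm

theorem sum_shift_sub_quadratic {R R' : Type*} [CommRing R] [Fintype R] [DecidableEq R]
    [CommRing R'] [IsDomain R'] {ψ : AddChar R R'} (hψ : ψ.IsPrimitive) (α β t : R) :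
    ∑ y, ψ (α * (y + t) ^ 2 + β * (y + t) - (α * y ^ 2 + β * y)) =
      ψ (α * t ^ 2 + β * t) * ↑(if 2 * α * t = 0 then Fintype.card R else 0) := by
  rw [← sum_mulShift _ hψ, mul_sum]
  refine sum_congr rfl fun y _ => ?_
  rw [← map_add_eq_mul]
  ring_nf

theorem sq_norm_sum_quadratic {F : Type*} [Field F] [Fintype F] {ψ : AddChar F ℂ}
    (hψ : ψ.IsPrimitive) {α : F} (hα : 2 * α ≠ 0) (β : F) :
    ‖∑ x, ψ (α * x ^ 2 + β * x)‖ ^ 2 = Fintype.card F := by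
  classical
  suffices (‖∑ x, ψ (α * x ^ 2 + β * x)‖ : ℂ) ^ 2 = Fintype.card F by exact_mod_cast this
  rw [sq_norm_sum_eq_sum_sum_sub, sum_eq_single 0 (fun t _ ht => ?_) (absurd (mem_univ 0))]
  · simp
  · simp [sum_shift_sub_quadratic hψ, mul_ne_zero hα ht]

end AddChar

theorem two_ne_zero_of_odd_char (p : ℕ) [Fact p.Prime] (hp : Odd p) (F : Type*) [Ring F]
    [Nontrivial F] [Algebra (ZMod p) F] : (2 : F) ≠ 0 := by
  have h2 : (2 : ZMod p) ≠ 0 :=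
    Ring.two_ne_zero (by rw [ZMod.ringChar_zmod_n]; exact hp.ne_two_of_dvd_nat dvd_rfl)
  rw [← map_ofNat (algebraMap (ZMod p) F) 2]
  exact (map_ne_zero _).2 h2

noncomputable def traceChar (p : ℕ) [NeZero p] (F : Type*) [Field F] [Algebra (ZMod p) F] :
    AddChar F ℂ :=
  ZMod.stdAddChar.compAddMonoidHom (Algebra.trace (ZMod p) F).toAddMonoidHom

theorem traceChar_isPrimitive (p : ℕ) [Fact p.Prime] (F : Type*) [Field F] [Finite F]
    [Algebra (ZMod p) F] : (traceChar p F).IsPrimitive := by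
  refine AddChar.IsPrimitive.of_ne_one (AddChar.ne_one_iff.2 ?_)
  obtain ⟨x, hx⟩ := Algebra.trace_surjective (ZMod p) F 1
  refine ⟨x, fun h => one_ne_zero (ZMod.injective_stdAddChar (N := p) ?_)⟩
  rwa [AddChar.map_zero_eq_one, ← hx]

section v

variable (p : ℕ) [NeZero p] (F : Type) [Field F] [Fintype F] [Algebra (ZMod p) F]

theorem v_apply (a b x : F) :
    v p F a b x = (1 / Real.sqrt (Fintype.card F) : ℂ) * traceChar p F (a * x ^ 2 + b * x) := by
  simp [v, traceChar, ZMod.stdAddChar_apply, ZMod.toCircle_apply]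

theorem inner_v_v (a b c d : F) :
    ⟪v p F a b, v p F c d⟫_ℂ =
      (1 / Fintype.card F : ℂ) * ∑ x, traceChar p F ((c - a) * x ^ 2 + (d - b) * x) := by
  have hscale : (1 / Real.sqrt (Fintype.card F) : ℂ) *
      (starRingEnd ℂ) (1 / Real.sqrt (Fintype.card F) : ℂ) = 1 / Fintype.card F := by
    rw [map_div₀, map_one, Complex.conj_ofReal, div_mul_div_comm, one_mul, ← Complex.ofReal_mul,
      Real.mul_self_sqrt (Nat.cast_nonneg _), Complex.ofReal_natCast]
  rw [PiLp.inner_apply, mul_sum]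
  refine sum_congr rfl fun x _ => ?_
  rw [RCLike.inner_apply, v_apply, v_apply, map_mul, ← AddChar.map_neg_eq_conj, mul_mul_mul_comm,
    hscale, ← AddChar.map_add_eq_mul]
  ring_nf

end v

/-- If `a ≠ c`, then `|⟨v_{a,b}, v_{c,d}⟩|² = 1/q` for all `b, d ∈ F_q`:
the bases `B_a` and `B_c` are mutually unbiased (odd characteristic `p`). -/
theorem Ba_Bc_mutually_unbiased (p : ℕ) [Fact p.Prime] (hp : Odd p)
    (F : Type) [Field F] [Fintype F] [Algebra (ZMod p) F]
    (a c : F) (hac : a ≠ c) (b d : F) :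
    ‖⟪v p F a b, v p F c d⟫_ℂ‖ ^ 2 = 1 / Fintype.card F := by
  have hα : 2 * (c - a) ≠ 0 :=
    mul_ne_zero (two_ne_zero_of_odd_char p hp F) (sub_ne_zero.2 hac.symm)
  rw [inner_v_v, norm_mul, mul_pow, AddChar.sq_norm_sum_quadratic (traceChar_isPrimitive p F) hα,
    norm_div, norm_one, Complex.norm_natCast]
  field_simp
end

section
/- Let N(d) denote the maximum number of pairwise mutually unbiased orthonormal bases of ℂ^d. Then N(nm) ≥ min{N(n), N(m)} for all integers n, m ≥ 2. -/
/-!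
Tensor products of mutually unbiased bases are mutually unbiased: if `(Bᵢ)` are MUBs of `ℂⁿ` and
`(Cᵢ)` are MUBs of `ℂᵐ`, then `(Bᵢ ⊗ Cᵢ)` are MUBs of `ℂⁿᵐ`, because inner products of pure tensors
factor and `1/n · 1/m = 1/(nm)`. Pairing the first `min (N n) (N m)` bases on both sides gives the
bound. The only other point is that the supremum defining `N d` is attained, i.e. the sizes of
MUB families are bounded (by `d²`) once `d ≥ 2`.
-/

open scoped InnerProductSpace

/-- `B` is a family of `m` pairwise mutually unbiased orthonormal bases of
`ℂ^d`. -/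
def IsMUBFamily (d m : ℕ) (B : Fin m → Fin d → EuclideanSpace ℂ (Fin d)) : Prop :=
  (∀ i, Orthonormal ℂ (B i) ∧ Submodule.span ℂ (Set.range (B i)) = ⊤) ∧
  (∀ i j, i ≠ j → ∀ a b, ‖⟪B i a, B j b⟫_ℂ‖ ^ 2 = 1 / d)

/-- `N d` is the maximal number of pairwise mutually unbiased orthonormal bases
of `ℂ^d`. -/
noncomputable def N (d : ℕ) : ℕ :=
  sSup {m : ℕ | ∃ B : Fin m → Fin d → EuclideanSpace ℂ (Fin d), IsMUBFamily d m B}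

open Matrix ComplexOrder in
theorem linearIndependent_of_inner_eq_ite {𝕜 E ι : Type*} [RCLike 𝕜] [NormedAddCommGroup E]
    [InnerProductSpace 𝕜 E] [Fintype ι] [DecidableEq ι] {v : ι → E} {c : ℝ}
    (hc₀ : 0 ≤ c) (hc₁ : c < 1) (hv : ∀ i j, ⟪v i, v j⟫_𝕜 = if i = j then 1 else (c : 𝕜)) :
    LinearIndependent 𝕜 v := by
  have hgram : gram 𝕜 v = (1 - c) • (1 : Matrix ι ι 𝕜) + c • vecMulVec 1 (star 1) := by
    ext i j
    by_cases h : i = j <;> simp [gram, hv, h, one_apply, RCLike.real_smul_eq_coe_mul]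
  refine linearIndependent_of_posDef_gram ?_
  rw [hgram]
  exact (PosDef.one.smul (sub_pos.2 hc₁)).add_posSemidef
    ((posSemidef_vecMulVec_self_star 1).smul hc₀)

section Kronecker

variable {𝕜 : Type*} [RCLike 𝕜] {n m : ℕ}

def kronVec (u : EuclideanSpace 𝕜 (Fin n)) (v : EuclideanSpace 𝕜 (Fin m)) :
    EuclideanSpace 𝕜 (Fin (n * m)) :=
  WithLp.toLp 2 fun x => u (finProdFinEquiv.symm x).1 * v (finProdFinEquiv.symm x).2

theorem inner_kronVec (u u' : EuclideanSpace 𝕜 (Fin n)) (v v' : EuclideanSpace 𝕜 (Fin m)) :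
    ⟪kronVec u v, kronVec u' v'⟫_𝕜 = ⟪u, u'⟫_𝕜 * ⟪v, v'⟫_𝕜 := by
  simp only [PiLp.inner_apply, RCLike.inner_apply, kronVec, Finset.sum_mul_sum,
    ← Finset.sum_product', Finset.univ_product_univ]
  refine Fintype.sum_equiv finProdFinEquiv.symm _ _ fun x => ?_
  simp only [map_mul]
  ring

theorem Orthonormal.kronVec {u : Fin n → EuclideanSpace 𝕜 (Fin n)}
    {v : Fin m → EuclideanSpace 𝕜 (Fin m)} (hu : Orthonormal 𝕜 u) (hv : Orthonormal 𝕜 v) :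
    Orthonormal 𝕜 fun c : Fin (n * m) =>
      kronVec (u (finProdFinEquiv.symm c).1) (v (finProdFinEquiv.symm c).2) := by
  rw [orthonormal_iff_ite]
  intro c c'
  rw [inner_kronVec, orthonormal_iff_ite.1 hu, orthonormal_iff_ite.1 hv, ite_zero_mul_ite_zero,
    mul_one]
  simp only [← Prod.ext_iff, EmbeddingLike.apply_eq_iff_eq]

end Kronecker

def conjVec {𝕜 ι : Type*} [RCLike 𝕜] (u : EuclideanSpace 𝕜 ι) : EuclideanSpace 𝕜 ι :=
  WithLp.toLp 2 fun i => starRingEnd 𝕜 (u i)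

theorem inner_conjVec {𝕜 ι : Type*} [RCLike 𝕜] [Fintype ι] (u v : EuclideanSpace 𝕜 ι) :
    ⟪conjVec u, conjVec v⟫_𝕜 = ⟪v, u⟫_𝕜 := by
  simp only [PiLp.inner_apply, RCLike.inner_apply, conjVec, RCLike.conj_conj]
  exact Finset.sum_congr rfl fun _ _ => mul_comm _ _

namespace IsMUBFamily

variable {d k : ℕ}

theorem comp {K : ℕ} {B : Fin K → Fin d → EuclideanSpace ℂ (Fin d)} (hB : IsMUBFamily d K B)
    {f : Fin k → Fin K} (hf : Function.Injective f) : IsMUBFamily d k (B ∘ f) :=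
  ⟨fun i => hB.1 (f i), fun _ _ hij => hB.2 _ _ (hf.ne hij)⟩

/- With `wᵢ` the first vector of the `i`-th basis, the vectors `wᵢ ⊗ w̄ᵢ ∈ ℂ^{d²}` have
`⟪wᵢ ⊗ w̄ᵢ, wⱼ ⊗ w̄ⱼ⟫ = |⟪wᵢ, wⱼ⟫|²`, so their Gram matrix is `(1 - 1/d) I + (1/d) J`. -/
theorem card_le_sq {B : Fin k → Fin d → EuclideanSpace ℂ (Fin d)} (hB : IsMUBFamily d k B)
    (hd : 2 ≤ d) : k ≤ d * d := by
  have : NeZero d := ⟨by omega⟩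
  have hli : LinearIndependent ℂ fun i => kronVec (B i 0) (conjVec (B i 0)) := by
    refine linearIndependent_of_inner_eq_ite (c := 1 / d) (by positivity) ?_ fun i j => ?_
    · rw [div_lt_one (by positivity)]
      exact_mod_cast hd
    rw [inner_kronVec, inner_conjVec, ← inner_conj_symm (B j 0), RCLike.mul_conj]
    split_ifs with h
    · subst h
      simp [(hB.1 i).1.1 0]
    · exact_mod_cast hB.2 i j h 0 0
  simpa using hli.fintype_card_le_finrank

theorem kron {n m : ℕ} {B : Fin k → Fin n → EuclideanSpace ℂ (Fin n)}
    {C : Fin k → Fin m → EuclideanSpace ℂ (Fin m)} (hB : IsMUBFamily n k B)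
    (hC : IsMUBFamily m k C) :
    IsMUBFamily (n * m) k fun i c =>
      kronVec (B i (finProdFinEquiv.symm c).1) (C i (finProdFinEquiv.symm c).2) := by
  have hon i := (hB.1 i).1.kronVec (hC.1 i).1
  refine ⟨fun i => ⟨hon i, (hon i).linearIndependent.span_eq_top_of_card_eq_finrank' ?_⟩,
    fun i j hij a b => ?_⟩
  · simp
  · rw [inner_kronVec, norm_mul, mul_pow, hB.2 i j hij, hC.2 i j hij]
    push_cast
    exact one_div_mul_one_div _ _

end IsMUBFamily

theorem bddAbove_setOf_isMUBFamily {d : ℕ} (hd : 2 ≤ d) :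
    BddAbove {k | ∃ B : Fin k → Fin d → EuclideanSpace ℂ (Fin d), IsMUBFamily d k B} :=
  ⟨d * d, fun _ ⟨_, hB⟩ => hB.card_le_sq hd⟩

theorem exists_isMUBFamily_N {d : ℕ} (hd : 2 ≤ d) :
    ∃ B : Fin (N d) → Fin d → EuclideanSpace ℂ (Fin d), IsMUBFamily d (N d) B :=
  Nat.sSup_mem (s := {k | ∃ B : Fin k → Fin d → EuclideanSpace ℂ (Fin d), IsMUBFamily d k B})
    ⟨0, fun i => i.elim0, fun i => i.elim0, fun i => i.elim0⟩ (bddAbove_setOf_isMUBFamily hd)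

theorem le_N {d k : ℕ} (hd : 2 ≤ d) {B : Fin k → Fin d → EuclideanSpace ℂ (Fin d)}
    (hB : IsMUBFamily d k B) : k ≤ N d :=
  le_csSup (bddAbove_setOf_isMUBFamily hd) ⟨B, hB⟩

/-- MacNeish-type bound: `N(nm) ≥ min{N(n), N(m)}` for all `n, m ≥ 2`. -/
theorem N_mul_ge_min (n m : ℕ) (hn : 2 ≤ n) (hm : 2 ≤ m) :
    min (N n) (N m) ≤ N (n * m) := by
  obtain ⟨B, hB⟩ := exists_isMUBFamily_N hn
  obtain ⟨C, hC⟩ := exists_isMUBFamily_N hm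
  have hB' := hB.comp (Fin.castLE_injective (min_le_left (N n) (N m)))
  have hC' := hC.comp (Fin.castLE_injective (min_le_right (N n) (N m)))
  exact le_N (by nlinarith) (hB'.kron hC')
end
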